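/- arXiv:2312.17200 — 3 statements merged into one kernel-verified Lean document; each statement's English description precedes it below -/
import Mathlib

section
/- Let (β_1, …, β_l) be a λ-chain with separating hyperplanes h_j = H_{−β_j, d_j}, and for each j let r̂_{h_j} be the affine reflection along h_j and r̃_{h_j} the affine reflection along the hyperplane H_{β_j, ⟨λ, β_j^∨⟩ − d_j}, and r_{h_j} = s_{β_j} the corresponding linear reflection. Then for any subsequence J = {j_1 < j_2 < … < j_t} ⊂ {1,…,l}, one has −r̂_{h_{j_1}} r̂_{h_{j_2}} ⋯ r̂_{h_{j_t}}(−λ) = r_{h_{j_1}} r_{h_{j_2}} ⋯ r_{h_{j_t}} · r̃_{h_{j_t}} r̃_{h_{j_{t−1}}} ⋯ r̃_{h_{j_1}}(λ). -/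
/-- Composition of a list of maps: `compList [f₁, …, fₙ] = f₁ ∘ f₂ ∘ ⋯ ∘ fₙ`. -/
def compList {V : Type*} (fs : List (V → V)) : V → V := fs.foldr (· ∘ ·) id

section Aux

variable {V : Type*} [AddCommGroup V] [Module ℝ V]

lemma compList_nil (x : V) : compList ([] : List (V → V)) x = x := rfl

lemma compList_cons (f : V → V) (fs : List (V → V)) (x : V) :
    compList (f :: fs) x = f (compList fs x) := rfl

lemma compList_append (fs gs : List (V → V)) (x : V) :
    compList (fs ++ gs) x = compList fs (compList gs x) := by
  induction fs with
  | nil => rfl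
  | cons f fs ih => simp [compList_cons, ih]

variable (co : V → V →ₗ[ℝ] ℝ) (lam : V) (β : ℕ → V) (d : ℕ → ℝ)

/-- linear reflection -/
def sβ (j : ℕ) (μ : V) : V := μ - co (β j) μ • β j
/-- `q j = -r̂_j(-·)` -/
def qf (j : ℕ) (μ : V) : V := sβ co β j μ + d j • β j
/-- affine reflection r̂ -/
def rhat (j : ℕ) (μ : V) : V := sβ co β j μ - d j • β j
/-- affine reflection r̃ -/
def rtil (j : ℕ) (μ : V) : V := sβ co β j μ + (co (β j) lam - d j) • β j

lemma sβ_add (j : ℕ) (x w : V) : sβ co β j (x + w) = sβ co β j x + sβ co β j w := by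
  simp [sβ, add_smul]; abel

lemma qf_add (j : ℕ) (x w : V) : qf co β d j (x + w) = qf co β d j x + sβ co β j w := by
  simp [qf, sβ_add]; abel

lemma neg_rhat (j : ℕ) (x : V) : - rhat co β d j (-x) = qf co β d j x := by
  simp [rhat, qf, sβ]; abel

/-- sβ j (rtil j μ) = μ + (d j - co (β j) lam) • β j, given co (β j) (β j) = 2. -/
lemma sβ_rtil (j : ℕ) (h2 : co (β j) (β j) = 2) (μ : V) :
    sβ co β j (rtil co lam β d j μ) = μ + (d j - co (β j) lam) • β j := by
  simp only [sβ, rtil, map_add, map_sub, map_smul, smul_eq_mul, h2]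
  module

lemma neg_compList_rhat (L : List ℕ) (x : V) :
    - compList (L.map (rhat co β d)) (-x) = compList (L.map (qf co β d)) x := by
  induction L generalizing x with
  | nil => simp [compList_nil]
  | cons j L ih =>
      simp only [List.map_cons, compList_cons]
      rw [← ih x]
      rw [← neg_rhat co β d j (- compList (L.map (rhat co β d)) (-x))]
      simp

lemma compList_qf_add (L : List ℕ) (x w : V) :
    compList (L.map (qf co β d)) (x + w)
      = compList (L.map (qf co β d)) x + compList (L.map (sβ co β)) w := by
  induction L generalizing x w with
  | nil => simp [compList_nil]
  | cons j L ih =>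
      simp only [List.map_cons, compList_cons, ih, qf_add]

lemma compList_sβ_add (L : List ℕ) (x w : V) :
    compList (L.map (sβ co β)) (x + w)
      = compList (L.map (sβ co β)) x + compList (L.map (sβ co β)) w := by
  induction L generalizing x w with
  | nil => simp [compList_nil]
  | cons j L ih =>
      simp only [List.map_cons, compList_cons, ih, sβ_add]

lemma main_aux (L : List ℕ) (h2 : ∀ j ∈ L, co (β j) (β j) = 2) :
    compList (L.map (qf co β d)) lam
      = compList (L.map (sβ co β)) (compList ((L.map (rtil co lam β d)).reverse) lam) := by
  induction L using List.reverseRecOn with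
  | nil => simp [compList_nil]
  | append_singleton L j ih =>
      have h2j : co (β j) (β j) = 2 := h2 j (by simp)
      have h2L : ∀ j ∈ L, co (β j) (β j) = 2 := fun k hk => h2 k (by simp [hk])
      simp only [List.map_append, List.map_cons, List.map_nil, List.reverse_append,
        List.reverse_cons, List.reverse_nil, List.nil_append, List.cons_append,
        compList_append, compList_cons, compList_nil]
      have hq : qf co β d j lam = lam + (d j - co (β j) lam) • β j := by
        simp [qf, sβ, sub_smul]; abel
      rw [hq, compList_qf_add, ih h2L,
        sβ_rtil co lam β d j h2j (compList (List.reverse (L.map (rtil co lam β d))) lam),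
        compList_sβ_add]

end Aux

/-- Let `(β_1, …, β_l)` be a `λ`-chain with separating hyperplanes
`h_j = H_{−β_j, d_j}`, so that `s_{β_j}(μ) = μ − ⟨μ,β_j^∨⟩β_j` is the linear
reflection `r_{h_j}`, `r̂_{h_j}(μ) = s_{β_j}(μ) − d_j β_j` is the affine
reflection along `h_j`, and `r̃_{h_j}(μ) = s_{β_j}(μ) + (⟨λ,β_j^∨⟩ − d_j)β_j`
is the affine reflection along `H_{β_j, ⟨λ,β_j^∨⟩ − d_j}`.  For any
subsequence `J = {j_1 < ⋯ < j_t} ⊆ {1,…,l}`: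
`−r̂_{h_{j_1}} ⋯ r̂_{h_{j_t}}(−λ) = r_{h_{j_1}} ⋯ r_{h_{j_t}} · r̃_{h_{j_t}} ⋯ r̃_{h_{j_1}}(λ)`. -/
theorem stmt_9 {V : Type*} [AddCommGroup V] [Module ℝ V]
    (co : V → V →ₗ[ℝ] ℝ) (lam : V) (l : ℕ) (β : ℕ → V) (d : ℕ → ℝ)
    (hco2 : ∀ j, 1 ≤ j → j ≤ l → co (β j) (β j) = 2)
    (t : ℕ) (J : Fin t → ℕ) (hJ : StrictMono J)
    (hJ1 : ∀ i, 1 ≤ J i) (hJl : ∀ i, J i ≤ l) :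
    - compList (List.ofFn (fun i : Fin t => fun μ : V =>
        (μ - co (β (J i)) μ • β (J i)) - d (J i) • β (J i))) (-lam)
    = compList (List.ofFn (fun i : Fin t => fun μ : V =>
        μ - co (β (J i)) μ • β (J i)))
      (compList ((List.ofFn (fun i : Fin t => fun μ : V =>
        (μ - co (β (J i)) μ • β (J i)) + (co (β (J i)) lam - d (J i)) • β (J i))).reverse)
        lam) := by
  have e1 : List.ofFn (fun i : Fin t => fun μ : V =>
        (μ - co (β (J i)) μ • β (J i)) - d (J i) • β (J i))
      = (List.ofFn J).map (rhat co β d) := by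
    rw [List.map_ofFn]; rfl
  have e2 : List.ofFn (fun i : Fin t => fun μ : V => μ - co (β (J i)) μ • β (J i))
      = (List.ofFn J).map (sβ co β) := by
    rw [List.map_ofFn]; rfl
  have e3 : List.ofFn (fun i : Fin t => fun μ : V =>
        (μ - co (β (J i)) μ • β (J i)) + (co (β (J i)) lam - d (J i)) • β (J i))
      = (List.ofFn J).map (rtil co lam β d) := by
    rw [List.map_ofFn]; rfl
  rw [e1, e2, e3, neg_compList_rhat, main_aux]
  intro j hj
  obtain ⟨i, rfl⟩ := List.mem_ofFn.mp hj
  exact hco2 (J i) (hJ1 i) (hJl i)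
end

section
/- Let R be a commutative ring equipped with a ring involution r ↦ r^∨, extended to the Laurent polynomial ring R[q, q^{-1}] by (q^n)^∨ = q^{-n}. If g ∈ R[q,q^{-1}] satisfies g + q^{-1} g^∨ = 0, then there exists f ∈ R[q,q^{-1}] with g = f − q^{-1} f^∨. -/
open LaurentPolynomial Finsupp

private lemma Dcoeff {R : Type*} [CommRing R] (σ : R →+* R)
    (D : LaurentPolynomial R →+ LaurentPolynomial R)
    (hD : ∀ (r : R) (n : ℤ),
      D (LaurentPolynomial.C r * LaurentPolynomial.T n)
        = LaurentPolynomial.C (σ r) * LaurentPolynomial.T (-n))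
    (g : LaurentPolynomial R) (n : ℤ) : (D g).coeff n = σ (g.coeff (-n)) := by
  induction g using AddMonoidAlgebra.induction with
  | zero => simp
  | single_add a b f ha hb ih =>
      rw [map_add, AddMonoidAlgebra.coeff_add, Finsupp.add_apply, ih, AddMonoidAlgebra.coeff_add,
        Finsupp.add_apply, map_add]
      congr 1
      rw [show (AddMonoidAlgebra.single a b : LaurentPolynomial R) = C b * T a from
        single_eq_C_mul_T b a, hD, ← single_eq_C_mul_T, ← single_eq_C_mul_T,
        AddMonoidAlgebra.coeff_single, AddMonoidAlgebra.coeff_single, Finsupp.single_apply, Finsupp.single_apply]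
      by_cases h : a = -n
      · rw [if_pos h, if_pos (by omega)]
      · rw [if_neg h, if_neg (by omega), map_zero]

private lemma coeff_T_neg_one_mul {R : Type*} [CommRing R]
    (x : LaurentPolynomial R) (n : ℤ) :
    (LaurentPolynomial.T (-1) * x : LaurentPolynomial R).coeff n = x.coeff (1 + n) := by
  rw [show (T (-1 : ℤ) : LaurentPolynomial R) = AddMonoidAlgebra.single (-1) 1 from rfl,
    AddMonoidAlgebra.coeff_single_mul_apply, one_mul, neg_neg]

/-- Let `R` be a commutative ring with a ring involution `σ`, extended to the
Laurent polynomial ring `R[q,q⁻¹]` by the additive map `D` with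
`D(r qⁿ) = σ(r) q⁻ⁿ`.  If `g ∈ R[q,q⁻¹]` satisfies `g + q⁻¹ g^∨ = 0`
(where `g^∨ = D g`), then there exists `f` with `g = f − q⁻¹ f^∨`. -/
theorem stmt_12 {R : Type*} [CommRing R] (σ : R →+* R) (hσ : ∀ r, σ (σ r) = r)
    (D : LaurentPolynomial R →+ LaurentPolynomial R)
    (hD : ∀ (r : R) (n : ℤ),
      D (LaurentPolynomial.C r * LaurentPolynomial.T n)
        = LaurentPolynomial.C (σ r) * LaurentPolynomial.T (-n))
    (g : LaurentPolynomial R)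
    (hg : g + LaurentPolynomial.T (-1) * D g = 0) :
    ∃ f : LaurentPolynomial R, g = f - LaurentPolynomial.T (-1) * D f := by
  have hgc : ∀ n : ℤ, g.coeff n + σ (g.coeff (-(1 + n))) = 0 := by
    intro n
    have h0 : (g + LaurentPolynomial.T (-1) * D g : LaurentPolynomial R).coeff n = 0 := by
      rw [hg]; rfl
    rw [AddMonoidAlgebra.coeff_add, Finsupp.add_apply, coeff_T_neg_one_mul, Dcoeff σ D hD] at h0
    exact h0
  refine ⟨AddMonoidAlgebra.ofCoeff (Finsupp.filter (fun n : ℤ => 0 ≤ n) g.coeff), ?_⟩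
  ext n
  rw [AddMonoidAlgebra.coeff_sub, Finsupp.sub_apply, coeff_T_neg_one_mul, Dcoeff σ D hD,
    AddMonoidAlgebra.coeff_ofCoeff,
    Finsupp.filter_apply, Finsupp.filter_apply]
  by_cases h : (0:ℤ) ≤ n
  · rw [if_pos h, if_neg (by omega : ¬ (0:ℤ) ≤ -(1 + n)), map_zero, sub_zero]
  · rw [if_neg h, if_pos (by omega : (0:ℤ) ≤ -(1 + n)), zero_sub]
    linear_combination hgc n
end

section
/- Let Ṫ_i and Ṫ_i^∨ denote the Demazure–Lusztig operators on the group algebra localization Q(X)[y] given by Ṫ_i(e^λ) = −e^λ (1+y)/(1−e^{−α_i}) + e^{s_iλ}(1+y e^{α_i})/(1−e^{−α_i}) and Ṫ_i^∨(e^λ) = −e^λ(1+y)/(1−e^{−α_i}) + e^{s_iλ}(1+y e^{−α_i})/(1−e^{−α_i}). Then for every simple reflection s_i, Ṫ_i = e^ρ ∘ (Ṫ_i^∨|_{y ↦ y^{-1}}) ∘ e^{−ρ} · y, where e^{±ρ} denotes multiplication by e^{±ρ} and ρ is the half-sum of positive roots. Consequently, Ṫ_w = e^ρ (Ṫ_w^∨|_{y↦y^{-1}})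 e^{−ρ} y^{ℓ(w)} for all w ∈ W. -/
/-!
Both operators have the shape `f ↦ u · φ f - v · f` with `φ` fixing `y`. Conjugating by
multiplication with `r = e^ρ` only rescales the coefficient of `φ f`, by `(a i)` since
`φ i r = r (a i)⁻¹`, and multiplying by `y` rescales both coefficients; with `y ↦ y⁻¹` this turns
the coefficients of `Ṫ_i^∨` into those of `Ṫ_i`. For words, the factor `y` commutes with every
`Ṫ_j^∨` because `φ j y = y`, so the factors collect into `y ^ ℓ`.
-/

section TwistOp

variable {F : Type*} [Field F]

def twistOp (φ : F ≃+* F) (u v : F) (f : F) : F :=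
  u * φ f - v * f

theorem twistOp_mul_right (φ : F ≃+* F) (u v f c : F) :
    twistOp φ u v f * c = twistOp φ (u * c) (v * c) f := by
  unfold twistOp; ring

theorem twistOp_mul_of_map_eq (φ : F ≃+* F) (u v f : F) {c : F} (hc : φ c = c) :
    twistOp φ u v (f * c) = twistOp φ u v f * c := by
  unfold twistOp; rw [map_mul, hc]; ring

theorem mul_twistOp_inv_mul (φ : F ≃+* F) (u v f : F) {r c : F} (hr : r ≠ 0)
    (hφr : φ r = r * c) :
    r * twistOp φ u v (r⁻¹ * f) = twistOp φ (u * c⁻¹) v f := by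
  unfold twistOp
  rw [map_mul, map_inv₀, hφr, mul_inv]
  field_simp

end TwistOp

theorem foldr_comp_map_eq_mul_conj {F I : Type*} [Field F] (P Q : I → F → F) {r y : F}
    (hr : r ≠ 0) (hPQ : ∀ i f, P i f = r * Q i (r⁻¹ * f) * y)
    (hQ : ∀ i f (n : ℕ), Q i (f * y ^ n) = Q i f * y ^ n) (ws : List I) (f : F) :
    (ws.map P).foldr (· ∘ ·) id f = r * (ws.map Q).foldr (· ∘ ·) id (r⁻¹ * f) * y ^ ws.length := by
  induction ws with
  | nil => simp [hr]
  | cons i ws ih =>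
    simp only [List.map_cons, List.foldr_cons, Function.comp_apply, List.length_cons, ih, hPQ]
    rw [← mul_assoc r⁻¹, ← mul_assoc r⁻¹, inv_mul_cancel₀ hr, one_mul, hQ]
    ring

theorem stmt_13_general {F I : Type*} [Field F] (y r : F) (hy : y ≠ 0) (hr : r ≠ 0)
    (a : I → F) (φ : I → F ≃+* F)
    (ha : ∀ i, a i ≠ 0)
    (hφy : ∀ i, φ i y = y) (hφr : ∀ i, φ i r = r * (a i)⁻¹) :
    (∀ (i : I) (f : F),
      ((1 + y * a i) / (1 - (a i)⁻¹) * φ i f - (1 + y) / (1 - (a i)⁻¹) * f)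
        = r * ((1 + y⁻¹ * (a i)⁻¹) / (1 - (a i)⁻¹) * φ i (r⁻¹ * f)
            - (1 + y⁻¹) / (1 - (a i)⁻¹) * (r⁻¹ * f)) * y) ∧
    (∀ (ws : List I) (f : F),
      (ws.map (fun i (f : F) =>
          (1 + y * a i) / (1 - (a i)⁻¹) * φ i f
            - (1 + y) / (1 - (a i)⁻¹) * f)).foldr (· ∘ ·) id f
        = r * ((ws.map (fun i (f : F) =>
            (1 + y⁻¹ * (a i)⁻¹) / (1 - (a i)⁻¹) * φ i f
              - (1 + y⁻¹) / (1 - (a i)⁻¹) * f)).foldr (· ∘ ·) id) (r⁻¹ * f)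
          * y ^ ws.length) := by
  have simple : ∀ (i : I) (f : F),
      twistOp (φ i) ((1 + y * a i) / (1 - (a i)⁻¹)) ((1 + y) / (1 - (a i)⁻¹)) f
        = r * twistOp (φ i) ((1 + y⁻¹ * (a i)⁻¹) / (1 - (a i)⁻¹)) ((1 + y⁻¹) / (1 - (a i)⁻¹))
            (r⁻¹ * f) * y := by
    intro i f
    rw [mul_twistOp_inv_mul _ _ _ _ hr (hφr i), twistOp_mul_right]
    congr 1 <;> field_simp [ha i, hy] <;> ring
  refine ⟨simple, foldr_comp_map_eq_mul_conj _ _ hr simple fun i f n => ?_⟩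
  exact twistOp_mul_of_map_eq _ _ _ _ (by rw [map_pow, hφy])

/-- The Demazure–Lusztig operators on the localized group algebra
`F = Frac(ℤ[X])[y]`: for a simple root `α_i`, writing `a i = e^{α_i}`,
`r = e^ρ`, and letting `φ i` be the field automorphism induced by the simple
reflection `s_i` (so `φ i` fixes `y`, and `φ i r = e^{s_i ρ} = r · (a i)⁻¹`
since `s_i ρ = ρ − α_i`), the operators are
`Ṫ_i f = (1 + y e^{α_i})/(1 − e^{−α_i}) · s_i(f) − (1+y)/(1 − e^{−α_i}) · f`
and `Ṫ_i^∨` with `e^{α_i}` replaced by `e^{−α_i}` in the first numerator.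
Then `Ṫ_i = e^ρ ∘ (Ṫ_i^∨|_{y ↦ y⁻¹}) ∘ e^{−ρ} · y` for every `i`, and
consequently `Ṫ_w = e^ρ (Ṫ_w^∨|_{y↦y⁻¹}) e^{−ρ} y^{ℓ(w)}` for all `w ∈ W`
(expressed via words in the simple reflections: `Ṫ_w` is the composition of the
`Ṫ_i` along a reduced word for `w`, of length `ℓ(w)`). -/
theorem stmt_13 {F I : Type*} [Field F] (y r : F) (hy : y ≠ 0) (hr : r ≠ 0)
    (a : I → F) (φ : I → F ≃+* F)
    (ha : ∀ i, a i ≠ 0) (hden : ∀ i, (1 : F) - (a i)⁻¹ ≠ 0)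
    (hφy : ∀ i, φ i y = y) (hφr : ∀ i, φ i r = r * (a i)⁻¹) :
    (∀ (i : I) (f : F),
      ((1 + y * a i) / (1 - (a i)⁻¹) * φ i f - (1 + y) / (1 - (a i)⁻¹) * f)
        = r * ((1 + y⁻¹ * (a i)⁻¹) / (1 - (a i)⁻¹) * φ i (r⁻¹ * f)
            - (1 + y⁻¹) / (1 - (a i)⁻¹) * (r⁻¹ * f)) * y) ∧
    (∀ (ws : List I) (f : F),
      (ws.map (fun i (f : F) =>
          (1 + y * a i) / (1 - (a i)⁻¹) * φ i f
            - (1 + y) / (1 - (a i)⁻¹) * f)).foldr (· ∘ ·) id f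
        = r * ((ws.map (fun i (f : F) =>
            (1 + y⁻¹ * (a i)⁻¹) / (1 - (a i)⁻¹) * φ i f
              - (1 + y⁻¹) / (1 - (a i)⁻¹) * f)).foldr (· ∘ ·) id) (r⁻¹ * f)
          * y ^ ws.length) :=
  stmt_13_general y r hy hr a φ ha hφy hφr
end
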